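/- Spivey's type formula for the λ-analogue of the r-Lah-Bell polynomials: for all m, n, r ≥ 0 and nonzero real λ, LB_{n+m,λ}^{(r)}(t) = Σ_{j=0}^{m} Σ_{k=0}^{n} C(n,k)·L_λ^r(m,j)·⟨m+j⟩_{n-k}·t^j·λ^{n-k}·LB_{k,λ}^{(r)}(t). -/

import Mathlib

/-- Rising factorial ⟨x⟩ₙ = x(x+1)⋯(x+n-1). -/
noncomputable def risingFac (x : ℝ) (n : ℕ) : ℝ := ∏ i ∈ Finset.range n, (x + i)

/-- Falling factorial (x)ₙ = x(x-1)⋯(x-n+1). -/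
noncomputable def fallingFac (x : ℝ) (n : ℕ) : ℝ := ∏ i ∈ Finset.range n, (x - i)

/-- Lah numbers L(n,k) = (n!/k!)·C(n-1,k-1) for n ≥ k ≥ 1, L(0,0)=1, and 0 for n < k. -/
noncomputable def lah (n k : ℕ) : ℝ :=
  if k ≤ n then (n.factorial : ℝ) / (k.factorial : ℝ) * ((n - 1).choose (k - 1)) else 0

/-- Lah-Bell polynomial LBₙ(x) = Σ_{k=0}^n L(n,k) xᵏ. -/
noncomputable def lahBell (n : ℕ) (x : ℝ) : ℝ := ∑ k ∈ Finset.range (n + 1), lah n k * x ^ k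

/-- r-Lah numbers Lʳ(n,k) = (n!/k!)·C(n+r-1, k+r-1) for n ≥ k, and 0 for n < k. -/
noncomputable def rLah (r n k : ℕ) : ℝ :=
  if k ≤ n then (n.factorial : ℝ) / (k.factorial : ℝ) * ((n + r - 1).choose (k + r - 1)) else 0

/-- r-Lah-Bell polynomial LBₙ⁽ʳ⁾(x) = Σ_{k=0}^n Lʳ(n,k) xᵏ. -/
noncomputable def rLahBell (r n : ℕ) (x : ℝ) : ℝ :=
  ∑ k ∈ Finset.range (n + 1), rLah r n k * x ^ k

/-- Degenerate rising factorial ⟨x⟩_{n,λ} = x(x+λ)⋯(x+(n-1)λ). -/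
noncomputable def degRising (l x : ℝ) (n : ℕ) : ℝ := ∏ i ∈ Finset.range n, (x + i * l)

/-- Degenerate falling factorial (x)_{n,λ} = x(x-λ)⋯(x-(n-1)λ). -/
noncomputable def degFalling (l x : ℝ) (n : ℕ) : ℝ := ∏ i ∈ Finset.range n, (x - i * l)

/-- Degenerate binomial coefficient C_λ(x,k) = (x)_{k,λ}/k!. -/
noncomputable def degChoose (l x : ℝ) (k : ℕ) : ℝ := degFalling l x k / (k.factorial : ℝ)

/-!
Let `φ` be the linear functional on real functions that sends `(x)_{s,λ}` to `t ^ s` for `s ≤ N`;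
it is realised by Newton's forward differences with step `λ` at `0`, since
`Δ_λ^k (x)_{s,λ} |_{x=0} = s! λ^s δ_{ks}`. Applying `φ` to the defining relation turns
`⟨x + r⟩_{p,λ}` into `LB_{p,λ}^{(r)}(t)`. On the other hand
`⟨x + r⟩_{m+n,λ} = ⟨x + r⟩_{m,λ} ⟨x + r + mλ⟩_{n,λ}`: expand the first factor by the defining
relation into terms `L(m,j) (x)_{j,λ}`, write `x + r + mλ = (x - jλ + r) + (m + j)λ` in the
`j`-th term and expand the second factor by the Vandermonde identity for `⟨·⟩_{n,λ}`, then once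
more by the defining relation. Since `(x)_{j,λ} (x - jλ)_{i,λ} = (x)_{j+i,λ}`, this writes
`⟨x + r⟩_{m+n,λ}` in the basis `(x)_{s,λ}`, and applying `φ` gives the formula.
-/

open Finset Nat fwdDiff

lemma degRising_succ (l y : ℝ) (n : ℕ) :
    degRising l y (n + 1) = degRising l y n * (y + n * l) :=
  prod_range_succ _ _

lemma degFalling_succ (l x : ℝ) (n : ℕ) :
    degFalling l x (n + 1) = degFalling l x n * (x - n * l) :=
  prod_range_succ _ _

lemma degRising_add (l y : ℝ) (m n : ℕ) :
    degRising l y (m + n) = degRising l y m * degRising l (y + m * l) n := by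
  rw [degRising, prod_range_add]
  congr 1
  exact prod_congr rfl fun i _ => by push_cast; ring

lemma degFalling_add (l x : ℝ) (j i : ℕ) :
    degFalling l x (j + i) = degFalling l x j * degFalling l (x - j * l) i := by
  rw [degFalling, prod_range_add]
  congr 1
  exact prod_congr rfl fun q _ => by push_cast; ring

lemma degRising_mul_right (l c : ℝ) (p : ℕ) :
    degRising l (c * l) p = risingFac c p * l ^ p := by
  calc degRising l (c * l) p = ∏ i ∈ range p, ((c + i) * l) :=
        prod_congr rfl fun i _ => by ring
    _ = risingFac c p * l ^ p := by rw [prod_mul_distrib, prod_const, card_range, risingFac]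

lemma degRising_add_eq_sum_antidiagonal (l a b : ℝ) (n : ℕ) :
    degRising l (a + b) n =
      ∑ ij ∈ antidiagonal n, (n.choose ij.1 : ℝ) * (degRising l a ij.1 * degRising l b ij.2) := by
  induction n with
  | zero => simp [degRising]
  | succ n ih =>
    rw [sum_antidiagonal_choose_succ_mul (fun i j => degRising l a i * degRising l b j),
      ← sum_add_distrib, degRising_succ, ih, sum_mul]
    refine sum_congr rfl fun ij hij => ?_
    rw [HasAntidiagonal.mem_antidiagonal] at hij
    have hsplit : a + b + n * l = (a + ij.1 * l) + (b + ij.2 * l) := by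
      rw [← hij]; push_cast; ring
    rw [← choose_symm_of_eq_add hij.symm, hsplit, degRising_succ, degRising_succ]
    ring

lemma degFalling_zero_left (l : ℝ) (s : ℕ) : degFalling l 0 s = if s = 0 then 1 else 0 := by
  cases s <;> simp [degFalling, prod_range_succ']

lemma fwdDiff_degFalling (l : ℝ) (s : ℕ) :
    Δ_[l] (fun x => degFalling l x (s + 1)) = ((s + 1 : ℝ) * l) • fun x => degFalling l x s := by
  ext x
  have hshift : degFalling l (x + l) (s + 1) = (x + l) * degFalling l x s := by
    rw [add_comm s, degFalling_add]
    simp [degFalling]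
  simp only [fwdDiff, Pi.smul_apply, smul_eq_mul, hshift, degFalling_succ]
  ring

lemma fwdDiff_iter_degFalling_zero (l : ℝ) (k s : ℕ) :
    (Δ_[l])^[k] (fun x => degFalling l x s) 0 = if k = s then (s ! : ℝ) * l ^ s else 0 := by
  induction k generalizing s with
  | zero =>
    rw [Function.iterate_zero_apply, degFalling_zero_left]
    split_ifs with hs <;> simp_all [eq_comm]
  | succ k ih =>
    cases s with
    | zero =>
      have hconst : Δ_[l] (fun x => degFalling l x 0) = fun _ => 0 := by
        simp [degFalling]
      rw [Function.iterate_succ_apply, hconst,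
        Function.iterate_fixed (fwdDiff_const l (0 : ℝ))]
      simp
    | succ s =>
      rw [Function.iterate_succ_apply, fwdDiff_degFalling, fwdDiff_iter_const_smul,
        Pi.smul_apply, ih]
      split_ifs <;> simp_all [factorial_succ, pow_succ]
      ring

noncomputable def umbralEval (l t : ℝ) (N : ℕ) : (ℝ → ℝ) →ₗ[ℝ] ℝ where
  toFun f := ∑ k ∈ range (N + 1), t ^ k / (k ! * l ^ k) * (Δ_[l])^[k] f 0
  map_add' f g := by simp [mul_add, sum_add_distrib]
  map_smul' c f := by simp [mul_sum, mul_left_comm]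

lemma umbralEval_degFalling {l : ℝ} (hl : l ≠ 0) (t : ℝ) {N s : ℕ} (hs : s ≤ N) :
    umbralEval l t N (fun x => degFalling l x s) = t ^ s := by
  have hs' : s ∈ range (N + 1) := mem_range.2 (Nat.lt_succ_of_le hs)
  simp only [umbralEval, LinearMap.coe_mk, AddHom.coe_mk, fwdDiff_iter_degFalling_zero,
    mul_ite, mul_zero, sum_ite_eq', hs', if_true]
  field_simp

lemma LinearMap.map_fun_sum {α ι R : Type*} [CommSemiring R] (F : (α → R) →ₗ[R] R)
    (s : Finset ι) (g : ι → α → R) :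
    F (fun x => ∑ i ∈ s, g i x) = ∑ i ∈ s, F (g i) := by
  rw [← map_sum]
  congr 1
  ext x
  simp

lemma LinearMap.map_fun_const_mul {α R : Type*} [CommSemiring R] (F : (α → R) →ₗ[R] R)
    (c : R) (g : α → R) :
    F (fun x => c * g x) = c * F g :=
  map_smul F c g

lemma degRising_add_eq_sum_degFalling {l r : ℝ} {L : ℕ → ℕ → ℝ}
    (hL : ∀ (p : ℕ) (x : ℝ),
      degRising l (x + r) p = ∑ j ∈ range (p + 1), L p j * degFalling l x j)
    (m n : ℕ) (x : ℝ) :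
    degRising l (x + r) (m + n) =
      ∑ j ∈ range (m + 1), ∑ k ∈ range (n + 1), ∑ i ∈ range (k + 1),
        (n.choose k * L m j * risingFac (m + j) (n - k) * l ^ (n - k) * L k i) *
          degFalling l x (j + i) := by
  rw [degRising_add, hL m x, sum_mul]
  refine sum_congr rfl fun j _ => ?_
  have hshift : x + r + m * l = (x - j * l + r) + (m + j : ℝ) * l := by ring
  rw [hshift, degRising_add_eq_sum_antidiagonal, Nat.sum_antidiagonal_eq_sum_range_succ_mk,
    mul_sum]
  refine sum_congr rfl fun k _ => ?_
  rw [hL k, degRising_mul_right, sum_mul, mul_sum, mul_sum]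
  refine sum_congr rfl fun i _ => ?_
  rw [degFalling_add]
  ring

/-- Spivey's type formula for the λ-analogue of the r-Lah-Bell polynomials, where the
λ-analogue of the r-Lah numbers L is defined by ⟨x+r⟩_{n,λ} = Σ_{k=0}^n L(n,k)(x)_{k,λ},
and LB_{n,λ}⁽ʳ⁾(t) = Σ_{k=0}^n L(n,k) tᵏ. -/
theorem degRLahBell_spivey (l : ℝ) (hl : l ≠ 0) (L : ℕ → ℕ → ℝ) (r m n : ℕ) (t : ℝ)
    (hL : ∀ (p : ℕ) (x : ℝ),
      degRising l (x + r) p = ∑ j ∈ Finset.range (p + 1), L p j * degFalling l x j) :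
    (∑ k ∈ Finset.range (n + m + 1), L (n + m) k * t ^ k) =
      ∑ j ∈ Finset.range (m + 1), ∑ k ∈ Finset.range (n + 1),
        (n.choose k : ℝ) * L m j * risingFac ((m : ℝ) + j) (n - k) * t ^ j * l ^ (n - k) *
          (∑ i ∈ Finset.range (k + 1), L k i * t ^ i) := by
  calc ∑ k ∈ range (n + m + 1), L (n + m) k * t ^ k
      = umbralEval l t (n + m) (fun x => degRising l (x + r) (n + m)) := by
        simp only [hL, LinearMap.map_fun_sum, LinearMap.map_fun_const_mul]
        exact sum_congr rfl fun k hk => by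
          rw [umbralEval_degFalling hl t (mem_range_succ_iff.1 hk)]
    _ = ∑ j ∈ range (m + 1), ∑ k ∈ range (n + 1), ∑ i ∈ range (k + 1),
          (n.choose k * L m j * risingFac (m + j) (n - k) * l ^ (n - k) * L k i) * t ^ (j + i) := by
        rw [add_comm n m]
        simp only [degRising_add_eq_sum_degFalling hL, LinearMap.map_fun_sum,
          LinearMap.map_fun_const_mul]
        refine sum_congr rfl fun j hj => sum_congr rfl fun k hk => sum_congr rfl fun i hi => ?_
        simp only [mem_range] at hj hk hi
        rw [umbralEval_degFalling hl t (by omega)]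
    _ = _ := by
        refine sum_congr rfl fun j _ => sum_congr rfl fun k _ => ?_
        rw [mul_sum]
        exact sum_congr rfl fun i _ => by ring
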